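/- arXiv:1710.07970 — 3 statements merged into one kernel-verified Lean document; each statement's English description precedes it below -/
import Mathlib

section
/- Let (X, 𝒜, ν) be a probability space and let T : X → X be a measure-preserving transformation. Let φ : X → ℝ be a measurable function and let L < γ < Γ be real numbers with φ(x) ≥ L for all x ∈ X. Let ε > 0 and set κ = ε(Γ − γ)/(Γ − L). If ν({x ∈ X : φ(x) > Γ}) > 1 − εκ, then there exists a measurable set A ⊆ X with ν(A) > 1 − ε such that for every x ∈ A, liminf_{N→∞} (1/N)·#{n ∈ {1, …, N} : n is a γ-Pliss time for x} ≥ 1 − ε. -/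
/-!
Let `B = {φ ≤ Γ}`, so that `ν B < εκ`. Hopf's maximal ergodic theorem, applied to `1_B - κ`,
shows that the set `E` of points some orbit segment of which (of length `N`) visits `B` more
than `κN` times has measure at most `ν B / κ < ε`. Off `E`, the partial sums of
`min (φ ∘ T^j) Γ - γ` grow at rate at least `(Γ - γ) - (Γ - L)κ = (1 - ε)(Γ - γ)`, while each
step adds at most `Γ - γ`; so up to time `N` they must reach a new maximum at least `(1 - ε)N`
times, and every such record time is a `γ`-Pliss time.
-/

open MeasureTheory Filter Finset

def IsRecordTime (s : ℕ → ℝ) (n : ℕ) : Prop := ∀ k < n, s k ≤ s n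

noncomputable instance (s : ℕ → ℝ) : DecidablePred (IsRecordTime s) :=
  fun n => inferInstanceAs (Decidable (∀ k < n, s k ≤ s n))

theorem sub_le_mul_card_isRecordTime {s : ℕ → ℝ} {Δ : ℝ} (hΔ : 0 ≤ Δ)
    (hs : ∀ n, s (n + 1) ≤ s n + Δ) (N : ℕ) :
    s N - s 0 ≤ Δ * #{n ∈ Icc 1 N | IsRecordTime s n} := by
  induction N using Nat.strong_induction_on with
  | _ N ih =>
  have mono {k : ℕ} (hk : k ≤ N) :
      Δ * #{n ∈ Icc 1 k | IsRecordTime s n} ≤ Δ * #{n ∈ Icc 1 N | IsRecordTime s n} := by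
    gcongr
  rcases N with _ | M
  · simp
  by_cases hrec : IsRecordTime s (M + 1)
  · have hcard :
        #{n ∈ Icc 1 M | IsRecordTime s n} + 1 ≤ #{n ∈ Icc 1 (M + 1) | IsRecordTime s n} := by
      rw [← card_insert_of_notMem (a := M + 1) (by simp)]
      refine card_le_card (insert_subset (by simp [hrec]) ?_)
      exact filter_subset_filter _ (Icc_subset_Icc_right M.le_succ)
    calc s (M + 1) - s 0 ≤ (s M - s 0) + Δ := by linarith [hs M]
      _ ≤ Δ * #{n ∈ Icc 1 M | IsRecordTime s n} + Δ := by linarith [ih M M.lt_succ_self]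
      _ ≤ _ := by
        rw [← mul_add_one]
        gcongr
        exact_mod_cast hcard
  · obtain ⟨k, hk, hlt⟩ : ∃ k < M + 1, s (M + 1) < s k := by
      simpa [IsRecordTime] using hrec
    calc s (M + 1) - s 0 ≤ s k - s 0 := by linarith
      _ ≤ _ := (ih k hk).trans (mono hk.le)

def IsPlissTime (a : ℕ → ℝ) (γ : ℝ) (n : ℕ) : Prop :=
  ∀ m < n, γ * ((n : ℝ) - m) ≤ ∑ j ∈ Ico m n, a j

noncomputable instance (a : ℕ → ℝ) (γ : ℝ) : DecidablePred (IsPlissTime a γ) :=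
  fun n => inferInstanceAs (Decidable (∀ m < n, γ * ((n : ℝ) - m) ≤ ∑ j ∈ Ico m n, a j))

theorem isPlissTime_of_isRecordTime {a b : ℕ → ℝ} (hba : ∀ j, b j ≤ a j) {γ : ℝ} {n : ℕ}
    (hn : IsRecordTime (fun n => ∑ j ∈ range n, (b j - γ)) n) : IsPlissTime a γ n := by
  intro m hm
  have hIco : 0 ≤ ∑ j ∈ Ico m n, (b j - γ) := by
    have hmn : ∑ j ∈ range m, (b j - γ) ≤ ∑ j ∈ range n, (b j - γ) := hn m hm
    rw [← sum_range_add_sum_Ico _ hm.le] at hmn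
    linarith
  rw [sum_sub_distrib, sum_const, Nat.card_Ico, nsmul_eq_mul, Nat.cast_sub hm.le] at hIco
  have := sum_le_sum fun j (_ : j ∈ Ico m n) => hba j
  linarith

theorem sum_min_sub_le_mul_card_isPlissTime (a : ℕ → ℝ) {γ Γ : ℝ} (hγΓ : γ ≤ Γ) (N : ℕ) :
    ∑ j ∈ range N, (min (a j) Γ - γ) ≤ (Γ - γ) * #{n ∈ Icc 1 N | IsPlissTime a γ n} := by
  set s : ℕ → ℝ := fun n => ∑ j ∈ range n, (min (a j) Γ - γ)
  have hs : ∀ n, s (n + 1) ≤ s n + (Γ - γ) := fun n => by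
    simp only [s, sum_range_succ]
    linarith [min_le_right (a n) Γ]
  calc ∑ j ∈ range N, (min (a j) Γ - γ) = s N - s 0 := by simp [s]
    _ ≤ (Γ - γ) * #{n ∈ Icc 1 N | IsRecordTime s n} :=
      sub_le_mul_card_isRecordTime (sub_nonneg.2 hγΓ) hs N
    _ ≤ (Γ - γ) * #{n ∈ Icc 1 N | IsPlissTime a γ n} := by
      gcongr with n
      exact isPlissTime_of_isRecordTime (fun j => min_le_left (a j) Γ)

theorem mul_sub_mul_card_le_sum_min_sub {a : ℕ → ℝ} {L : ℝ} (haL : ∀ j, L ≤ a j) (γ Γ : ℝ)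
    (N : ℕ) :
    (Γ - γ) * N - (Γ - L) * #{j ∈ range N | a j ≤ Γ} ≤ ∑ j ∈ range N, (min (a j) Γ - γ) := by
  have hcard : (Γ - L) * #{j ∈ range N | a j ≤ Γ} =
      ∑ j ∈ range N, if a j ≤ Γ then Γ - L else 0 := by
    rw [sum_ite, sum_const_zero, add_zero, sum_const, nsmul_eq_mul, mul_comm]
  have hconst : (Γ - γ) * N = ∑ j ∈ range N, (Γ - γ) := by
    rw [sum_const, card_range, nsmul_eq_mul, mul_comm]
  rw [hcard, hconst, ← sum_sub_distrib]
  refine sum_le_sum fun j _ => ?_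
  split_ifs with h
  · linarith [min_eq_left h, haL j]
  · linarith [min_eq_right (le_of_not_ge h)]

theorem one_sub_mul_le_card_isPlissTime {a : ℕ → ℝ} {L γ Γ ε : ℝ} (haL : ∀ j, L ≤ a j)
    (hLΓ : L < Γ) (hγΓ : γ < Γ) {N : ℕ}
    (hvisits : #{j ∈ range N | a j ≤ Γ} ≤ ε * (Γ - γ) / (Γ - L) * N) :
    (1 - ε) * N ≤ #{n ∈ Icc 1 N | IsPlissTime a γ n} := by
  have hΓγ : 0 < Γ - γ := sub_pos.2 hγΓ
  have hpliss := (mul_sub_mul_card_le_sum_min_sub haL γ Γ N).trans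
    (sum_min_sub_le_mul_card_isPlissTime a hγΓ.le N)
  have hvisits' : (Γ - L) * #{j ∈ range N | a j ≤ Γ} ≤ ε * (Γ - γ) * N :=
    calc (Γ - L) * #{j ∈ range N | a j ≤ Γ} ≤ (Γ - L) * (ε * (Γ - γ) / (Γ - L) * N) := by
          gcongr
      _ = ε * (Γ - γ) * N := by field_simp [(sub_pos.2 hLΓ).ne']
  refine le_of_mul_le_mul_left ?_ hΓγ
  linarith

section MaximalErgodic

variable {α : Type*} (f : α → α) (g : α → ℝ)

theorem birkhoffSum_le_partialSups {k n : ℕ} (hkn : k ≤ n) (x : α) :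
    birkhoffSum f g k x ≤ partialSups (birkhoffSum f g) n x :=
  le_partialSups_of_le (birkhoffSum f g) hkn x

theorem partialSups_birkhoffSum_nonneg (n : ℕ) (x : α) :
    0 ≤ partialSups (birkhoffSum f g) n x := by
  simpa using birkhoffSum_le_partialSups f g n.zero_le x

theorem partialSups_birkhoffSum_le_max (n : ℕ) (x : α) :
    partialSups (birkhoffSum f g) n x ≤ max 0 (g x + partialSups (birkhoffSum f g) n (f x)) := by
  rw [Pi.partialSups_apply]
  refine partialSups_le _ _ _ fun k hk => ?_
  rcases k with _ | k
  · simp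
  · rw [birkhoffSum_succ']
    exact le_max_of_le_right <| add_le_add le_rfl (birkhoffSum_le_partialSups f g (by omega) _)

theorem partialSups_birkhoffSum_sub_comp_le_indicator (n : ℕ) (x : α) :
    partialSups (birkhoffSum f g) n x - partialSups (birkhoffSum f g) n (f x) ≤
      {y | 0 < partialSups (birkhoffSum f g) n y}.indicator g x := by
  set M := partialSups (birkhoffSum f g) n
  have hmax : M x ≤ max 0 (g x + M (f x)) := partialSups_birkhoffSum_le_max f g n x
  by_cases hx : 0 < M x
  · rw [Set.indicator_of_mem (s := {y | 0 < M y}) hx]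
    rcases le_max_iff.1 hmax with h | h <;> linarith
  · rw [Set.indicator_of_notMem (s := {y | 0 < M y}) hx]
    linarith [partialSups_birkhoffSum_nonneg f g n (f x)]

theorem setOf_exists_birkhoffSum_pos :
    {x | ∃ n, 0 < birkhoffSum f g n x} = ⋃ n, {x | 0 < partialSups (birkhoffSum f g) n x} := by
  ext x
  simp only [Set.mem_ofPred_eq, Set.mem_iUnion]
  constructor
  · rintro ⟨n, hn⟩
    exact ⟨n, hn.trans_le (birkhoffSum_le_partialSups f g le_rfl x)⟩
  · rintro ⟨n, hn⟩
    by_contra! h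
    exact hn.not_ge <| by rw [Pi.partialSups_apply]; exact partialSups_le _ _ _ fun k _ => h k

theorem birkhoffSum_indicator_setOf {M : Type*} [AddCommMonoidWithOne M] (p : α → Prop)
    [DecidablePred p] (n : ℕ) (x : α) :
    birkhoffSum f ({y | p y}.indicator (1 : α → M)) n x = #{k ∈ range n | p (f^[k] x)} := by
  simp [birkhoffSum, Set.indicator_apply, sum_boole]

variable {f g} [MeasurableSpace α] {μ : Measure α}

theorem measurable_birkhoffSum (hf : Measurable f) (hg : Measurable g) (n : ℕ) :
    Measurable (birkhoffSum f g n) :=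
  Finset.measurable_sum _ fun k _ => hg.comp (hf.iterate k)

theorem measurable_partialSups_birkhoffSum (hf : Measurable f) (hg : Measurable g) (n : ℕ) :
    Measurable (partialSups (birkhoffSum f g) n) := by
  rw [partialSups_eq_sup'_range]
  exact Finset.measurable_sup' _ fun k _ => measurable_birkhoffSum hf hg k

theorem MeasureTheory.MeasurePreserving.integrable_birkhoffSum (hf : MeasurePreserving f μ μ)
    (hg : Integrable g μ) (n : ℕ) : Integrable (birkhoffSum f g n) μ :=
  integrable_finsetSum _ fun k _ => (hf.iterate k).integrable_comp_of_integrable hg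

theorem MeasureTheory.MeasurePreserving.integrable_partialSups_birkhoffSum
    (hf : MeasurePreserving f μ μ) (hg : Integrable g μ) (n : ℕ) :
    Integrable (partialSups (birkhoffSum f g) n) μ := by
  rw [partialSups_eq_sup'_range]
  exact Finset.sup'_induction _ (p := (Integrable · μ)) _ (fun _ h₁ _ h₂ => h₁.sup h₂)
    fun k _ => hf.integrable_birkhoffSum hg k

/-- Hopf's maximal ergodic theorem. -/
theorem MeasureTheory.MeasurePreserving.setIntegral_partialSups_birkhoffSum_pos_nonneg
    (hf : MeasurePreserving f μ μ) (hgm : Measurable g) (hg : Integrable g μ) (n : ℕ) :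
    0 ≤ ∫ x in {x | 0 < partialSups (birkhoffSum f g) n x}, g x ∂μ := by
  set M := partialSups (birkhoffSum f g) n
  have hMm : Measurable M := measurable_partialSups_birkhoffSum hf.measurable hgm n
  have hM : Integrable M μ := hf.integrable_partialSups_birkhoffSum hg n
  have hMf : Integrable (fun x => M (f x)) μ := hf.integrable_comp_of_integrable hM
  have hE : MeasurableSet {x | 0 < M x} := measurableSet_lt measurable_const hMm
  have hcomp : ∫ x, M (f x) ∂μ = ∫ x, M x ∂μ := by
    rw [← integral_map hf.aemeasurable (by rw [hf.map_eq]; exact hMm.aestronglyMeasurable),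
      hf.map_eq]
  calc (0 : ℝ) = ∫ x, (M x - M (f x)) ∂μ := by rw [integral_sub hM hMf, hcomp, sub_self]
    _ ≤ ∫ x, {x | 0 < M x}.indicator g x ∂μ :=
        integral_mono (hM.sub hMf) (hg.indicator hE)
          (partialSups_birkhoffSum_sub_comp_le_indicator f g n)
    _ = ∫ x in {x | 0 < M x}, g x ∂μ := integral_indicator hE

theorem MeasureTheory.MeasurePreserving.ofReal_mul_measure_exists_birkhoffSum_indicator_gt_le
    [IsFiniteMeasure μ] (hf : MeasurePreserving f μ μ) {s : Set α} (hs : MeasurableSet s)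
    (κ : ℝ) :
    ENNReal.ofReal κ * μ {x | ∃ n : ℕ, κ * n < birkhoffSum f (s.indicator 1) n x} ≤ μ s := by
  set g : α → ℝ := s.indicator 1 - fun _ => κ
  set E : ℕ → Set α := fun n => {x | 0 < partialSups (birkhoffSum f g) n x}
  have hgm : Measurable g := (measurable_const.indicator hs).sub measurable_const
  have hind : Integrable (s.indicator (1 : α → ℝ)) μ := (integrable_const 1).indicator hs
  have hg : Integrable g μ := hind.sub (integrable_const κ)
  have hE : ∀ n, κ * μ.real (E n) ≤ μ.real s := fun n => by
    have hmax : 0 ≤ ∫ x in E n, (s.indicator 1 x - κ) ∂μ :=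
      hf.setIntegral_partialSups_birkhoffSum_pos_nonneg hgm hg n
    rw [integral_sub hind.integrableOn integrableOn_const,
      setIntegral_const, smul_eq_mul, mul_comm] at hmax
    have := (setIntegral_le_integral (s := E n) hind
      (Eventually.of_forall (Set.indicator_nonneg fun _ _ => zero_le_one))).trans_eq
      (integral_indicator_one (μ := μ) hs)
    linarith
  have hmono : Monotone E := fun m n hmn x hx =>
    hx.trans_le ((partialSups (birkhoffSum f g)).monotone hmn x)
  have hunion : {x | ∃ n : ℕ, κ * n < birkhoffSum f (s.indicator 1) n x} = ⋃ n, E n := by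
    rw [← setOf_exists_birkhoffSum_pos]
    simp [g, birkhoffSum, mul_comm]
  rw [hunion, hmono.measure_iUnion, ENNReal.mul_iSup]
  refine iSup_le fun n => ?_
  rw [← ofReal_measureReal, ← ofReal_measureReal, ← ENNReal.ofReal_mul' measureReal_nonneg]
  exact ENNReal.ofReal_le_ofReal (hE n)

end MaximalErgodic

section Probability

variable {α : Type*} [MeasurableSpace α] {μ : Measure α} [IsProbabilityMeasure μ] {s : Set α}
  {t : ℝ}

theorem measureReal_lt_of_ofReal_one_sub_lt_measure_compl (hs : MeasurableSet s)
    (h : ENNReal.ofReal (1 - t) < μ sᶜ) : μ.real s < t := by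
  have := ENNReal.toReal_strict_mono (measure_ne_top _ _) h
  rw [ENNReal.toReal_ofReal', ← measureReal_def, probReal_compl_eq_one_sub hs] at this
  linarith [le_max_left (1 - t) 0]

theorem ofReal_one_sub_lt_measure_compl (hs : MeasurableSet s) (ht : t ≤ 1)
    (h : μ.real s < t) : ENNReal.ofReal (1 - t) < μ sᶜ := by
  rw [ENNReal.ofReal_lt_iff_lt_toReal (by linarith) (measure_ne_top _ _), ← measureReal_def,
    probReal_compl_eq_one_sub hs]
  linarith

end Probability

theorem le_liminf_card_filter_Icc_div {p : ℕ → Prop} [DecidablePred p] {c : ℝ}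
    (h : ∀ N ≥ 1, c * N ≤ #{n ∈ Icc 1 N | p n}) :
    c ≤ liminf (fun N : ℕ => (#{n ∈ Icc 1 N | p n} : ℝ) / N) atTop := by
  refine le_liminf_of_le (isCoboundedUnder_ge_of_le atTop (x := 1) fun N => ?_) ?_
  · refine div_le_one_of_le₀ ?_ N.cast_nonneg
    exact_mod_cast (card_filter_le _ _).trans (Nat.card_Icc 1 N).le
  · filter_upwards [eventually_ge_atTop 1] with N hN
    rw [le_div_iff₀ (by exact_mod_cast hN)]
    exact h N hN

/-- **Density of Pliss times.** Let `T` be a measure-preserving transformation of a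
probability space `(X, ν)`, let `φ : X → ℝ` be measurable with `φ ≥ L` everywhere, let
`L < γ < Γ`, `ε > 0` and `κ = ε(Γ − γ)/(Γ − L)`. If `ν {φ > Γ} > 1 − εκ`, then there is a
measurable set `A` with `ν A > 1 − ε` on which the asymptotic frequency of `γ`-Pliss times
(`n` is a `γ`-Pliss time for `x` if `∑_{j=m}^{n−1} φ(T^j x) ≥ γ(n−m)` for all `0 ≤ m < n`)
is at least `1 − ε`. -/
theorem density_of_pliss_times
    {X : Type*} [MeasurableSpace X] (ν : Measure X) [IsProbabilityMeasure ν]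
    (T : X → X) (hT : MeasurePreserving T ν ν)
    (φ : X → ℝ) (hφ : Measurable φ)
    (L γ Γ : ℝ) (hLγ : L < γ) (hγΓ : γ < Γ)
    (hbound : ∀ x, L ≤ φ x)
    (ε κ : ℝ) (hε : 0 < ε) (hκ : κ = ε * (Γ - γ) / (Γ - L))
    (hmeas : ν {x | Γ < φ x} > ENNReal.ofReal (1 - ε * κ)) :
    ∃ A : Set X, MeasurableSet A ∧ ν A > ENNReal.ofReal (1 - ε) ∧
      ∀ x ∈ A,
        (1 - ε : ℝ) ≤
          liminf (fun N : ℕ =>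
            (((Finset.Icc 1 N).filter (fun n =>
              ∀ m : ℕ, m < n →
                γ * ((n : ℝ) - (m : ℝ)) ≤ ∑ j ∈ Finset.Ico m n, φ (T^[j] x))).card : ℝ) / N)
            atTop := by
  have hκ_pos : 0 < κ := by
    rw [hκ]; exact div_pos (mul_pos hε (sub_pos.2 hγΓ)) (sub_pos.2 (hLγ.trans hγΓ))
  set B := {x | φ x ≤ Γ}
  have hB : MeasurableSet B := measurableSet_le hφ measurable_const
  set E := {x | ∃ n : ℕ, κ * n < birkhoffSum T (B.indicator 1) n x}
  have hE : MeasurableSet E := by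
    simp only [E, Set.ofPred_exists]
    exact .iUnion fun n => measurableSet_lt measurable_const
      (measurable_birkhoffSum hT.measurable (measurable_const.indicator hB) n)
  have hνB : ν.real B < ε * κ := by
    have hBc : Bᶜ = {x | Γ < φ x} := by ext; simp [B]
    exact measureReal_lt_of_ofReal_one_sub_lt_measure_compl hB (hBc ▸ hmeas)
  have hνE : κ * ν.real E ≤ ν.real B := by
    have := ENNReal.toReal_mono (measure_ne_top _ _)
      (hT.ofReal_mul_measure_exists_birkhoffSum_indicator_gt_le hB κ)
    rwa [ENNReal.toReal_mul, ENNReal.toReal_ofReal hκ_pos.le] at this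
  rcases lt_or_ge ε 1 with hε1 | hε1
  · refine ⟨Eᶜ, hE.compl, ofReal_one_sub_lt_measure_compl hE hε1.le
      (lt_of_mul_lt_mul_left (hνE.trans_lt (by linarith)) hκ_pos.le), fun x hx => ?_⟩
    refine le_liminf_card_filter_Icc_div fun N _ =>
      one_sub_mul_le_card_isPlissTime (fun j => hbound _) (hLγ.trans hγΓ) hγΓ ?_
    rw [← hκ, ← birkhoffSum_indicator_setOf T (fun y => φ y ≤ Γ)]
    exact not_lt.1 fun h => hx ⟨N, h⟩
  · refine ⟨Set.univ, .univ, by simp [ENNReal.ofReal_eq_zero.2 (by linarith : 1 - ε ≤ 0)],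
      fun x _ => le_liminf_card_filter_Icc_div fun N _ => ?_⟩
    nlinarith [(N.cast_nonneg : (0 : ℝ) ≤ N)]
end

section
/- Let M be a compact metric space. For a continuous function φ : M → ℝ let U_φ = {x ∈ M : φ(x) > 0}. Then the map (φ, μ) ↦ μ(U_φ), defined on C(M, ℝ) × 𝒫(M) with values in ℝ, is lower semicontinuous with respect to the product of the uniform (sup-norm) topology on C(M, ℝ) and the topology of weak convergence on 𝒫(M). That is, for every (φ, μ) and every ε > 0 there exist a neighborhood 𝒰 of φ in C(M, ℝ) and a neighborhood 𝕌 of μ in 𝒫(M) such that ν(U_ψ) > μ(U_φ) − ε for every (ψ, ν) ∈ 𝒰 × 𝕌. -/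
/-!
Approximate `{φ > 0}` from inside by the open sets `{φ > δ}`: for small `δ > 0` the set
`{φ > δ}` already has `μ`-measure close to `μ {φ > 0}`. It lies in `{ψ > 0}` as soon as
`‖ψ - φ‖ < δ`, and by the portmanteau theorem the measure of an open set is lower
semicontinuous under weak convergence.
-/

open MeasureTheory Filter Topology
open scoped ENNReal

theorem MeasureTheory.Measure.exists_pos_lt_measure_setOf_lt {α : Type*} [MeasurableSpace α]
    (μ : Measure α) {f : α → ℝ} {y : ℝ≥0∞} (hy : y < μ {x | 0 < f x}) :
    ∃ δ > 0, y < μ {x | δ < f x} := by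
  have hunion : {x | 0 < f x} = ⋃ n : ℕ, {x | 1 / (n + 1 : ℝ) < f x} := by
    ext x
    simp only [Set.mem_ofPred_eq, Set.mem_iUnion]
    exact ⟨exists_nat_one_div_lt, fun ⟨_, hn⟩ => Nat.one_div_pos_of_nat.trans hn⟩
  have hmono : Monotone fun n : ℕ => {x | 1 / (n + 1 : ℝ) < f x} := fun _ _ hmn x hx =>
    show _ < f x from (Nat.one_div_le_one_div hmn).trans_lt hx
  rw [hunion, hmono.measure_iUnion, lt_iSup_iff] at hy
  obtain ⟨n, hn⟩ := hy
  exact ⟨_, Nat.one_div_pos_of_nat, hn⟩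

theorem ContinuousMap.setOf_lt_subset_setOf_pos_of_dist_lt {X : Type*} [TopologicalSpace X]
    [CompactSpace X] {φ ψ : C(X, ℝ)} {δ : ℝ} (h : dist ψ φ < δ) :
    {x | δ < φ x} ⊆ {x | 0 < ψ x} := fun x hx => by
  have hψφ : φ x - ψ x < δ :=
    (le_abs_self _).trans_lt <| (abs_sub_comm _ _).trans_lt <|
      (ContinuousMap.dist_apply_le_dist x).trans_lt h
  simp only [Set.mem_ofPred_eq] at hx ⊢
  linarith

theorem LowerSemicontinuous.ennreal_toReal {α : Type*} [TopologicalSpace α] {f : α → ℝ≥0∞}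
    (hf : LowerSemicontinuous f) (hf_ne_top : ∀ x, f x ≠ ∞) :
    LowerSemicontinuous fun x => (f x).toReal := by
  intro x y hy
  rcases lt_or_ge y 0 with hy_neg | hy_nonneg
  · exact Eventually.of_forall fun _ => hy_neg.trans_le ENNReal.toReal_nonneg
  · filter_upwards
      [hf x _ ((ENNReal.ofReal_lt_iff_lt_toReal hy_nonneg (hf_ne_top x)).2 hy)] with x' hx'
    exact (ENNReal.ofReal_lt_iff_lt_toReal hy_nonneg (hf_ne_top x')).1 hx'

theorem MeasureTheory.ProbabilityMeasure.lowerSemicontinuous_measure_setOf_pos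
    {M : Type*} [TopologicalSpace M] [CompactSpace M] [MeasurableSpace M]
    [OpensMeasurableSpace M] [HasOuterApproxClosed M] :
    LowerSemicontinuous fun p : C(M, ℝ) × ProbabilityMeasure M =>
      (p.2 : Measure M) {x | 0 < p.1 x} := by
  rintro ⟨φ, μ⟩ y hy
  obtain ⟨δ, hδ, hμδ⟩ := (μ : Measure M).exists_pos_lt_measure_setOf_lt hy
  have hν : ∀ᶠ ν : ProbabilityMeasure M in 𝓝 μ, y < (ν : Measure M) {x | δ < φ x} :=
    eventually_lt_of_lt_liminf <| hμδ.trans_le <|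
      le_liminf_measure_open_of_tendsto tendsto_id (isOpen_lt continuous_const φ.continuous)
  have hψ : ∀ᶠ ψ in 𝓝 φ, dist ψ φ < δ := Metric.ball_mem_nhds φ hδ
  filter_upwards [hψ.prod_nhds hν] with ⟨ψ, ν⟩ ⟨hψ, hν⟩
  exact hν.trans_le (measure_mono (ContinuousMap.setOf_lt_subset_setOf_pos_of_dist_lt hψ))

/-- **Lower semicontinuity of `(φ, μ) ↦ μ{φ > 0}`.** On a compact metric space `M`, for
every continuous `φ : M → ℝ`, every Borel probability measure `μ`, and every `ε > 0`,
there are a neighborhood `𝒰` of `φ` in `C(M, ℝ)` (uniform topology) and a neighborhood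
`𝕌` of `μ` in the space of probability measures (weak convergence topology) such that
`ν {ψ > 0} > μ {φ > 0} − ε` for every `(ψ, ν) ∈ 𝒰 × 𝕌`. -/
theorem lower_semicontinuous_measure_of_positivity_set
    {M : Type*} [MetricSpace M] [CompactSpace M] [MeasurableSpace M] [BorelSpace M]
    (φ : C(M, ℝ)) (μ : ProbabilityMeasure M) (ε : ℝ) (hε : 0 < ε) :
    ∃ 𝒰 ∈ nhds φ, ∃ 𝕌 ∈ nhds μ,
      ∀ ψ ∈ 𝒰, ∀ ν ∈ 𝕌,
        ((ν : Measure M) {x | 0 < ψ x}).toReal >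
          ((μ : Measure M) {x | 0 < φ x}).toReal - ε := by
  have hlsc := ProbabilityMeasure.lowerSemicontinuous_measure_setOf_pos.ennreal_toReal
    fun p : C(M, ℝ) × ProbabilityMeasure M => measure_ne_top (p.2 : Measure M) _
  have hnear := hlsc (φ, μ) _ (sub_lt_self _ hε)
  rw [nhds_prod_eq] at hnear
  obtain ⟨𝒰, h𝒰, 𝕌, h𝕌, h𝒰𝕌⟩ := mem_prod_iff.mp hnear
  exact ⟨𝒰, h𝒰, 𝕌, h𝕌, fun ψ hψ ν hν => h𝒰𝕌 (Set.mk_mem_prod hψ hν)⟩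
end

section
/- Let X be a compact metric space and let c ∈ ℝ. For a continuous map g : X → X and a continuous function φ : X → ℝ define Λ(g, φ) = {x ∈ X : ∑_{j=0}^{N−1} φ(g^j x) ≤ cN for every integer N ≥ 1}. Let f, f_n : X → X be continuous maps with f_n → f uniformly, and let ψ, ψ_n : X → ℝ be continuous functions with ψ_n → ψ uniformly. Then every accumulation point of the sets Λ(f_n, ψ_n) belongs to Λ(f, ψ); that is, ⋂_{n≥1} closure(⋃_{k≥n} Λ(f_k, ψ_k)) ⊆ Λ(f, ψ). -/
open Filter

/-! Uniform convergence `f_n → f`, `ψ_n → ψ` with `f`, `ψ` uniformly continuous (automatic on a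
compact space) gives uniform convergence of every Birkhoff sum `∑_{j<N} ψ_n ∘ f_n^j` to
`∑_{j<N} ψ ∘ f^j`. Hence for each `ε > 0` the blocks `Λ(f_k, ψ_k)` with `k` large all lie in the
closed set `{∑_{j<N} ψ ∘ f^j ≤ c N + ε}`, and so do their accumulation points. -/

section UniformConvergence

variable {ι α β γ : Type*} [UniformSpace β] [UniformSpace γ] {p : Filter ι}

theorem TendstoUniformly.comp_of_uniformContinuous {F : ι → β → γ} {f : β → γ}
    {G : ι → α → β} {g : α → β} (hF : TendstoUniformly F f p) (hf : UniformContinuous f)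
    (hG : TendstoUniformly G g p) :
    TendstoUniformly (fun i x => F i (G i x)) (fun x => f (g x)) p := by
  intro u hu
  obtain ⟨t, ht, htu⟩ := comp_mem_uniformity_sets hu
  filter_upwards [hf.comp_tendstoUniformly hG t ht, hF t ht] with i hfG hFf x
  exact htu ⟨f (G i x), hfG x, hFf (G i x)⟩

theorem tendstoUniformly_const_self (f : α → β) : TendstoUniformly (fun (_ : ι) => f) f p :=
  fun _ hu => Eventually.of_forall fun _ _ => refl_mem_uniformity hu

theorem TendstoUniformly.iterate {F : ι → β → β} {f : β → β} (hF : TendstoUniformly F f p)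
    (hf : UniformContinuous f) (j : ℕ) :
    TendstoUniformly (fun i => (F i)^[j]) f^[j] p := by
  induction j with
  | zero => exact tendstoUniformly_const_self id
  | succ j ih =>
    simp only [Function.iterate_succ']
    exact hF.comp_of_uniformContinuous hf ih

theorem tendstoUniformly_finsetSum {κ M : Type*} [AddCommGroup M] [UniformSpace M]
    [IsUniformAddGroup M] {F : κ → ι → α → M} {f : κ → α → M} (s : Finset κ)
    (h : ∀ j ∈ s, TendstoUniformly (F j) (f j) p) :
    TendstoUniformly (fun i x => ∑ j ∈ s, F j i x) (fun x => ∑ j ∈ s, f j x) p := by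
  classical
  induction s using Finset.induction_on with
  | empty => simpa using tendstoUniformly_const_self (fun _ : α => (0 : M))
  | insert j s hj ih =>
    simp only [Finset.sum_insert hj]
    exact (h j (s.mem_insert_self j)).add (ih fun k hk => h k (Finset.mem_insert_of_mem hk))

theorem TendstoUniformly.birkhoffSum {M : Type*} [AddCommGroup M] [UniformSpace M]
    [IsUniformAddGroup M] {F : ι → β → β} {f : β → β} {Φ : ι → β → M} {φ : β → M}
    (hF : TendstoUniformly F f p) (hf : UniformContinuous f)
    (hΦ : TendstoUniformly Φ φ p) (hφ : UniformContinuous φ) (N : ℕ) :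
    TendstoUniformly (fun i => birkhoffSum (F i) (Φ i) N) (birkhoffSum f φ N) p :=
  tendstoUniformly_finsetSum _ fun j _ =>
    hΦ.comp_of_uniformContinuous hφ (hF.iterate hf j)

end UniformConvergence

theorem Continuous.birkhoffSum {α M : Type*} [TopologicalSpace α] [AddCommMonoid M]
    [TopologicalSpace M] [ContinuousAdd M] {f : α → α} {φ : α → M} (hf : Continuous f)
    (hφ : Continuous φ) (N : ℕ) : Continuous (birkhoffSum f φ N) :=
  continuous_finsetSum _ fun j _ => hφ.comp (hf.iterate j)

theorem le_of_mem_iInter_closure_of_tendstoUniformly {X : Type*} [TopologicalSpace X]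
    {F : ℕ → X → ℝ} {g : X → ℝ} (hg : Continuous g) (hF : TendstoUniformly F g atTop)
    {A : ℕ → Set X} {C : ℝ} (hA : ∀ k, ∀ y ∈ A k, F k y ≤ C) {x : X}
    (hx : x ∈ ⋂ n : ℕ, closure (⋃ k ∈ {k : ℕ | n ≤ k}, A k)) : g x ≤ C := by
  refine le_of_forall_pos_le_add fun ε hε => ?_
  obtain ⟨n, hn⟩ := eventually_atTop.1 (Metric.tendstoUniformly_iff.1 hF ε hε)
  have hsub : ⋃ k ∈ {k : ℕ | n ≤ k}, A k ⊆ {y | g y ≤ C + ε} := by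
    simp only [Set.iUnion_subset_iff]
    intro k hk y hy
    have hclose := hn k hk y
    rw [Real.dist_eq, abs_lt] at hclose
    show g y ≤ C + ε
    linarith [hA k y hy]
  exact closure_minimal hsub (isClosed_le hg continuous_const) (Set.mem_iInter.1 hx n)

theorem accumulation_of_pesin_like_blocks_general
    {X : Type*} [MetricSpace X] [CompactSpace X] (c : ℝ)
    (Λ : (X → X) → (X → ℝ) → Set X)
    (hΛ : ∀ g φ, Λ g φ =
      {x : X | ∀ N : ℕ, 1 ≤ N → ∑ j ∈ Finset.range N, φ (g^[j] x) ≤ c * N})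
    (f : X → X) (fseq : ℕ → X → X) (ψ : X → ℝ) (ψseq : ℕ → X → ℝ)
    (hf : Continuous f)
    (hψ : Continuous ψ)
    (hfconv : TendstoUniformly fseq f atTop)
    (hψconv : TendstoUniformly ψseq ψ atTop) :
    ⋂ n : ℕ, closure (⋃ k ∈ {k : ℕ | n ≤ k}, Λ (fseq k) (ψseq k)) ⊆ Λ f ψ := by
  intro x hx
  rw [hΛ]
  intro N hN
  have hsums := hfconv.birkhoffSum (CompactSpace.uniformContinuous_of_continuous hf)
    hψconv (CompactSpace.uniformContinuous_of_continuous hψ) N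
  refine le_of_mem_iInter_closure_of_tendstoUniformly (hf.birkhoffSum hψ N) hsums
    (fun k y hy => ?_) hx
  rw [hΛ] at hy
  exact hy N hN

/-- **Accumulation points of Pesin-like blocks.** Let `X` be a compact metric space and
`c ∈ ℝ`. For `g : X → X` and `φ : X → ℝ` let
`Λ(g, φ) = {x | ∑_{j=0}^{N−1} φ(g^j x) ≤ c·N for all N ≥ 1}`. If continuous maps
`f_n → f` uniformly and continuous functions `ψ_n → ψ` uniformly, then
`⋂_n closure (⋃_{k ≥ n} Λ(f_k, ψ_k)) ⊆ Λ(f, ψ)`. -/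
theorem accumulation_of_pesin_like_blocks
    {X : Type*} [MetricSpace X] [CompactSpace X] (c : ℝ)
    (Λ : (X → X) → (X → ℝ) → Set X)
    (hΛ : ∀ g φ, Λ g φ =
      {x : X | ∀ N : ℕ, 1 ≤ N → ∑ j ∈ Finset.range N, φ (g^[j] x) ≤ c * N})
    (f : X → X) (fseq : ℕ → X → X) (ψ : X → ℝ) (ψseq : ℕ → X → ℝ)
    (hf : Continuous f) (hfseq : ∀ n, Continuous (fseq n))
    (hψ : Continuous ψ) (hψseq : ∀ n, Continuous (ψseq n))
    (hfconv : TendstoUniformly fseq f atTop)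
    (hψconv : TendstoUniformly ψseq ψ atTop) :
    ⋂ n : ℕ, closure (⋃ k ∈ {k : ℕ | n ≤ k}, Λ (fseq k) (ψseq k)) ⊆ Λ f ψ :=
  accumulation_of_pesin_like_blocks_general c Λ hΛ f fseq ψ ψseq hf hψ hfconv hψconv
end
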